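/- arXiv:2207.13043 — 8 statements merged into one kernel-verified Lean document; each statement's English description precedes it below -/
import Mathlib

section
/- The row-insertion action factors through the Knuth relations: for any row r and letters a < b ≤ c, one has r · (bac) = r · (bca), and for letters a ≤ b < c, one has r · (acb) = r · (cab), where the action of a word is the composition of the actions of its letters. -/
/-- Schensted row insertion of a letter into a row, with the bumped letter
discarded: append `b` if every letter is `≤ b`, otherwise replace the
leftmost letter strictly greater than `b` by `b`. -/
def rowIns {A : Type*} [LinearOrder A] : List A → A → List A
  | [], b => [b]
  | a :: r, b => if a ≤ b then a :: rowIns r b else b :: r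

/-- Action of a word on a row, composing letter actions left to right. -/
def rowActW {A : Type*} [LinearOrder A] (r : List A) (w : List A) : List A :=
  w.foldl rowIns r

/-!
Inserting a letter changes the row at exactly one place: the leftmost letter exceeding it, or
the end. For `bac ≡ bca`, once `b` is in the row, `a < b` acts at or before `b` and `c ≥ b`
acts after it, so the two insertions commute. For `acb ≡ cab` on a sorted row the same holds
unless `a` and `c` bump the same letter; then in `acb` the letter `c` lands just after `a` and
is bumped by `b`, while in `cab` it is overwritten by `a` and `b` takes that next place.
-/

section RowInsertion

variable {A : Type*} [LinearOrder A]

theorem rowIns_cons_of_le {x b : A} (h : x ≤ b) (r : List A) :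
    rowIns (x :: r) b = x :: rowIns r b := if_pos h

theorem rowIns_cons_of_lt {x b : A} (h : b < x) (r : List A) :
    rowIns (x :: r) b = b :: r := if_neg h.not_ge

theorem rowIns_rowIns_of_lt_of_forall_lt {b c : A} (hbc : b < c) :
    ∀ r : List A, (∀ x ∈ r, c < x) → rowIns (rowIns r c) b = rowIns r b
  | [], _ => by simp [rowIns, hbc.not_ge]
  | x :: r, hr => by
    have hcx : c < x := hr x List.mem_cons_self
    rw [rowIns_cons_of_lt hcx, rowIns_cons_of_lt hbc, rowIns_cons_of_lt (hbc.trans hcx)]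

theorem rowIns_knuth_bac {a b c : A} (hab : a < b) (hbc : b ≤ c) :
    ∀ r : List A, rowIns (rowIns (rowIns r b) a) c = rowIns (rowIns (rowIns r b) c) a
  | [] => by simp [rowIns, hab.not_ge, (hab.trans_le hbc).le, hbc]
  | x :: r => by
    rcases le_or_gt x b with hxb | hbx
    · rcases le_or_gt x a with hxa | hax
      · simp only [rowIns_cons_of_le hxb, rowIns_cons_of_le hxa,
          rowIns_cons_of_le (hxb.trans hbc), rowIns_knuth_bac hab hbc r]
      · simp only [rowIns_cons_of_le hxb, rowIns_cons_of_lt hax,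
          rowIns_cons_of_le (hab.trans_le hbc).le, rowIns_cons_of_le (hxb.trans hbc)]
    · simp only [rowIns_cons_of_lt hbx, rowIns_cons_of_lt hab, rowIns_cons_of_le hbc,
        rowIns_cons_of_le (hab.trans_le hbc).le]

theorem rowIns_knuth_acb {a b c : A} (hab : a ≤ b) (hbc : b < c) :
    ∀ r : List A, r.Pairwise (· ≤ ·) →
      rowIns (rowIns (rowIns r a) c) b = rowIns (rowIns (rowIns r c) a) b
  | [], _ => by simp [rowIns, hab, hab.trans hbc.le, hbc.not_ge, (hab.trans_lt hbc).not_ge]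
  | x :: r, hr => by
    obtain ⟨hxr, hr⟩ := List.pairwise_cons.mp hr
    have hac := hab.trans_lt hbc
    rcases le_or_gt x a with hxa | hax
    · simp only [rowIns_cons_of_le hxa, rowIns_cons_of_le (hxa.trans hab),
        rowIns_cons_of_le (hxa.trans hac.le), rowIns_knuth_acb hab hbc r hr]
    rcases le_or_gt x c with hxc | hcx
    · simp only [rowIns_cons_of_lt hax, rowIns_cons_of_le hac.le, rowIns_cons_of_le hab,
        rowIns_cons_of_le hxc]
    · have hcr : ∀ y ∈ r, c < y := fun y hy => hcx.trans_le (hxr y hy)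
      simp only [rowIns_cons_of_lt hax, rowIns_cons_of_lt hcx, rowIns_cons_of_le hac.le,
        rowIns_cons_of_lt hac, rowIns_cons_of_le hab, rowIns_rowIns_of_lt_of_forall_lt hbc r hcr]

end RowInsertion

/-- the row-insertion action factors through the Knuth
relations. -/
theorem rowAct_knuth {A : Type*} [LinearOrder A] (r : List A)
    (hr : List.Pairwise (· ≤ ·) r) :
    (∀ a b c : A, a < b → b ≤ c → rowActW r [b, a, c] = rowActW r [b, c, a]) ∧
    (∀ a b c : A, a ≤ b → b < c → rowActW r [a, c, b] = rowActW r [c, a, b]) :=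
  ⟨fun _ _ _ hab hbc => rowIns_knuth_bac hab hbc r,
    fun _ _ _ hab hbc => rowIns_knuth_acb hab hbc r hr⟩
end

section
/- Over a two-letter alphabet, two words define the same mapping on all rows under the (bumped-letter-discarding) row-insertion action if and only if they are plactic (Knuth) congruent. -/
/-- One-step Knuth (plactic) relation with contexts:
`bac ∼ bca` for `a < b ≤ c` and `acb ∼ cab` for `a ≤ b < c`. -/
inductive KnuthStep {A : Type*} [LinearOrder A] : List A → List A → Prop
  | k1 (u v : List A) (a b c : A) (h1 : a < b) (h2 : b ≤ c) :
      KnuthStep (u ++ [b, a, c] ++ v) (u ++ [b, c, a] ++ v)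
  | k2 (u v : List A) (a b c : A) (h1 : a ≤ b) (h2 : b < c) :
      KnuthStep (u ++ [a, c, b] ++ v) (u ++ [c, a, b] ++ v)

/-- The plactic congruence: equivalence closure of the Knuth steps
(which are already closed under contexts). -/
def Plactic {A : Type*} [LinearOrder A] : List A → List A → Prop :=
  Relation.EqvGen KnuthStep

/-!
Plactic-equivalent words act equally on sorted rows over any ordered alphabet: the Knuth move
`bac ↦ bca` commutes with insertion into every row, `acb ↦ cab` with insertion into every sorted
row, and insertion keeps rows sorted.

Over `0 < 1` a sorted row is `0^m 1^t`; the letter `1` sends it to `0^m 1^(t+1)` and `0` to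
`0^(m+1) 1^(t-1)`. The moves `101 ≡ 110` and `010 ≡ 100` bring every word to a normal form
`1^k 0^i 1^j` with `k ≤ i`, which sends `0^m 1^t` to `0^(m+i) 1^(t+k-i+j)` (truncated
subtraction).
Acting on the empty row and on a long row of `1`s reads off `i`, `j` and `k`, so words with the
same action have the same normal form.
-/

open List Relation

section General

variable {A : Type*} [LinearOrder A]

@[simp]
lemma rowActW_nil (r : List A) : rowActW r [] = r := rfl

@[simp]
lemma rowActW_cons (r : List A) (x : A) (w : List A) :
    rowActW r (x :: w) = rowActW (rowIns r x) w := rfl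

lemma rowActW_append (r w₁ w₂ : List A) :
    rowActW r (w₁ ++ w₂) = rowActW (rowActW r w₁) w₂ :=
  foldl_append

lemma rowIns_append_of_forall_le {u : List A} {b : A} (h : ∀ a ∈ u, a ≤ b) (s : List A) :
    rowIns (u ++ s) b = u ++ rowIns s b := by
  induction u with
  | nil => rfl
  | cons a u ih =>
    simp only [forall_mem_cons] at h
    simp [rowIns, h.1, ih h.2]

lemma mem_rowIns {r : List A} {b x : A} (hx : x ∈ rowIns r b) : x ∈ r ∨ x = b := by
  induction r with
  | nil => simpa [rowIns] using hx
  | cons a r ih =>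
    unfold rowIns at hx
    split_ifs at hx
    · rcases mem_cons.1 hx with rfl | hx
      · simp
      · rcases ih hx with h | h <;> simp [h]
    · rcases mem_cons.1 hx with rfl | hx <;> simp [*]

lemma pairwise_rowIns {r : List A} (hr : r.Pairwise (· ≤ ·)) (b : A) :
    (rowIns r b).Pairwise (· ≤ ·) := by
  induction r with
  | nil => simp [rowIns]
  | cons a r ih =>
    rw [pairwise_cons] at hr
    unfold rowIns
    split_ifs with hab
    · refine pairwise_cons.2 ⟨fun x hx => ?_, ih hr.2⟩
      rcases mem_rowIns hx with hx | rfl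
      exacts [hr.1 x hx, hab]
    · exact pairwise_cons.2 ⟨fun x hx => (le_of_not_ge hab).trans (hr.1 x hx), hr.2⟩

lemma pairwise_rowActW {r : List A} (hr : r.Pairwise (· ≤ ·)) (w : List A) :
    (rowActW r w).Pairwise (· ≤ ·) := by
  induction w generalizing r with
  | nil => exact hr
  | cons x w ih => exact ih (pairwise_rowIns hr x)

lemma rowActW_knuth_bac {a b c : A} (hab : a < b) (hbc : b ≤ c) (r : List A) :
    rowActW r [b, a, c] = rowActW r [b, c, a] := by
  induction r with
  | nil => simp [rowIns, hab.not_ge, hab.le.trans hbc, hbc]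
  | cons h r ih =>
    simp only [rowActW_cons, rowActW_nil] at ih ⊢
    by_cases hha : h ≤ a
    · simp [rowIns, hha, hha.trans hab.le, hha.trans (hab.le.trans hbc), ih]
    by_cases hhb : h ≤ b
    · simp [rowIns, hha, hhb, hhb.trans hbc, hab.le.trans hbc]
    · simp [rowIns, hhb, hab.not_ge, hbc, hab.le.trans hbc]

lemma rowActW_knuth_acb {a b c : A} (hab : a ≤ b) (hbc : b < c) {r : List A}
    (hr : r.Pairwise (· ≤ ·)) : rowActW r [a, c, b] = rowActW r [c, a, b] := by
  induction r with
  | nil => simp [rowIns, hab, hbc.not_ge, hab.trans hbc.le, (hab.trans_lt hbc).not_ge]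
  | cons h r ih =>
    rw [pairwise_cons] at hr
    simp only [rowActW_cons, rowActW_nil] at ih ⊢
    by_cases hha : h ≤ a
    · simp [rowIns, hha, hha.trans hab, hha.trans (hab.trans hbc.le), ih hr.2]
    by_cases hhc : h ≤ c
    · simp [rowIns, hha, hhc, hab, hab.trans hbc.le]
    -- `r` lies above `h > c > b`, so `c` and `b` both land on its first cell.
    have hcb : rowIns (rowIns r c) b = rowIns r b := by
      cases r with
      | nil => simp [rowIns, hbc.not_ge]
      | cons y s =>
        have hcy : c < y := (lt_of_not_ge hhc).trans_le (hr.1 y mem_cons_self)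
        simp [rowIns, hcy.not_ge, hbc.not_ge, (hbc.trans hcy).not_ge]
    simp [rowIns, hha, hhc, hab, hab.trans hbc.le, (hab.trans_lt hbc).not_ge, hcb]

lemma KnuthStep.rowActW_eq {p q r : List A} (hpq : KnuthStep p q) (hr : r.Pairwise (· ≤ ·)) :
    rowActW r p = rowActW r q := by
  cases hpq with
  | k1 u v a b c hab hbc =>
    simp only [rowActW_append, rowActW_knuth_bac hab hbc]
  | k2 u v a b c hab hbc =>
    simp only [rowActW_append, rowActW_knuth_acb hab hbc (pairwise_rowActW hr u)]

lemma Plactic.rowActW_eq {p q r : List A} (hpq : Plactic p q) (hr : r.Pairwise (· ≤ ·)) :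
    rowActW r p = rowActW r q := by
  induction hpq with
  | rel p q hpq => exact hpq.rowActW_eq hr
  | refl => rfl
  | symm _ _ _ ih => exact ih.symm
  | trans _ _ _ _ _ ih₁ ih₂ => exact ih₁.trans ih₂

lemma Plactic.equivalence : Equivalence (@Plactic A _) :=
  EqvGen.is_equivalence _

lemma KnuthStep.append_left {p q : List A} (hpq : KnuthStep p q) (w : List A) :
    KnuthStep (w ++ p) (w ++ q) := by
  cases hpq with
  | k1 u v a b c hab hbc => simpa using KnuthStep.k1 (w ++ u) v a b c hab hbc
  | k2 u v a b c hab hbc => simpa using KnuthStep.k2 (w ++ u) v a b c hab hbc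

lemma KnuthStep.append_right {p q : List A} (hpq : KnuthStep p q) (w : List A) :
    KnuthStep (p ++ w) (q ++ w) := by
  cases hpq with
  | k1 u v a b c hab hbc => simpa using KnuthStep.k1 u (v ++ w) a b c hab hbc
  | k2 u v a b c hab hbc => simpa using KnuthStep.k2 u (v ++ w) a b c hab hbc

lemma Plactic.map {f : List A → List A} (hf : ∀ p q, KnuthStep p q → KnuthStep (f p) (f q))
    {p q : List A} (hpq : Plactic p q) : Plactic (f p) (f q) := by
  induction hpq with
  | rel p q hpq => exact .rel _ _ (hf p q hpq)
  | refl => exact .refl _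
  | symm _ _ _ ih => exact .symm _ _ ih
  | trans _ _ _ _ _ ih₁ ih₂ => exact .trans _ _ _ ih₁ ih₂

lemma Plactic.append {p q p' q' : List A} (h : Plactic p q) (h' : Plactic p' q') :
    Plactic (p ++ p') (q ++ q') :=
  Plactic.equivalence.trans (h.map fun _ _ hk => hk.append_right p')
    (h'.map fun _ _ hk => hk.append_left q)

end General

namespace TwoLetter

def row (m t : ℕ) : List (Fin 2) := replicate m 0 ++ replicate t 1

def normalWord (k i j : ℕ) : List (Fin 2) := replicate k 1 ++ replicate i 0 ++ replicate j 1

lemma pairwise_row (m t : ℕ) : (row m t).Pairwise (· ≤ ·) :=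
  pairwise_append.2 ⟨pairwise_replicate_of_refl, pairwise_replicate_of_refl, by simp⟩

lemma row_inj {m t m' t' : ℕ} : row m t = row m' t' ↔ m = m' ∧ t = t' := by
  refine ⟨fun h => ⟨?_, ?_⟩, fun ⟨hm, ht⟩ => hm ▸ ht ▸ rfl⟩
  · simpa [row, count_replicate] using congrArg (count 0) h
  · simpa [row, count_replicate] using congrArg (count 1) h

lemma rowIns_row_one (m t : ℕ) : rowIns (row m t) 1 = row m (t + 1) := by
  have h := rowIns_append_of_forall_le (u := row m t) (b := 1) (fun a _ => Fin.le_last a) []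
  simpa [row, rowIns, replicate_succ'] using h

lemma rowIns_row_zero (m t : ℕ) : rowIns (row m t) 0 = row (m + 1) (t - 1) := by
  rw [row, rowIns_append_of_forall_le (by simp)]
  cases t with
  | zero => simp [rowIns, row, replicate_succ']
  | succ t =>
    simp only [replicate_succ, cons_append, rowIns, row, Nat.add_sub_cancel]
    rw [if_neg (by decide), append_cons, ← replicate_succ', replicate_succ, cons_append]

lemma rowActW_row_replicate_one (m t n : ℕ) :
    rowActW (row m t) (replicate n 1) = row m (t + n) := by
  induction n generalizing t with
  | zero => rfl
  | succ n ih => rw [replicate_succ, rowActW_cons, rowIns_row_one, ih]; congr 1; omega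

lemma rowActW_row_replicate_zero (m t n : ℕ) :
    rowActW (row m t) (replicate n 0) = row (m + n) (t - n) := by
  induction n generalizing m t with
  | zero => rfl
  | succ n ih => rw [replicate_succ, rowActW_cons, rowIns_row_zero, ih]; congr 1 <;> omega

lemma rowActW_row_normalWord (m t k i j : ℕ) :
    rowActW (row m t) (normalWord k i j) = row (m + i) (t + k - i + j) := by
  rw [normalWord, rowActW_append, rowActW_append, rowActW_row_replicate_one,
    rowActW_row_replicate_zero, rowActW_row_replicate_one]

lemma normalWord_eq_of_rowActW_eq {k i j k' i' j' : ℕ} (hk : k ≤ i) (hk' : k' ≤ i')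
    (h : ∀ r : List (Fin 2), r.Pairwise (· ≤ ·) →
      rowActW r (normalWord k i j) = rowActW r (normalWord k' i' j')) :
    normalWord k i j = normalWord k' i' j' := by
  have h₀ := h (row 0 0) (pairwise_row 0 0)
  have h₁ := h (row 0 (i + i')) (pairwise_row 0 (i + i'))
  simp only [rowActW_row_normalWord, row_inj] at h₀ h₁
  obtain ⟨rfl, rfl, rfl⟩ : k = k' ∧ i = i' ∧ j = j' := by omega
  rfl

lemma plactic_ones_zero (j : ℕ) :
    Plactic (replicate (j + 1) (1 : Fin 2) ++ [0]) (1 :: 0 :: replicate j 1) := by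
  induction j with
  | zero => exact .refl _
  | succ j ih =>
    have hknuth : KnuthStep (1 :: 0 :: replicate (j + 1) 1 : List (Fin 2))
        (1 :: 1 :: 0 :: replicate j 1) := by
      simpa [replicate_succ] using
        KnuthStep.k1 [] (replicate j 1) (0 : Fin 2) 1 1 (by decide) le_rfl
    have hstep : Plactic (replicate (j + 2) (1 : Fin 2) ++ [0])
        (1 :: 1 :: 0 :: replicate j 1) := by
      simpa [replicate_succ] using (Plactic.equivalence.refl [(1 : Fin 2)]).append ih
    exact Plactic.equivalence.trans hstep (.symm _ _ (.rel _ _ hknuth))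

lemma plactic_zeros_one_zero (i : ℕ) :
    Plactic (replicate i (0 : Fin 2) ++ [1, 0]) (1 :: replicate (i + 1) 0) := by
  induction i with
  | zero => exact .refl _
  | succ i ih =>
    have hknuth : KnuthStep (0 :: 1 :: replicate (i + 1) 0 : List (Fin 2))
        (1 :: replicate (i + 2) 0) := by
      simpa [replicate_succ] using
        KnuthStep.k2 [] (replicate i 0) (0 : Fin 2) 0 1 le_rfl (by decide)
    have hstep : Plactic (replicate (i + 1) (0 : Fin 2) ++ [1, 0])
        (0 :: 1 :: replicate (i + 1) 0) := by
      simpa [replicate_succ] using (Plactic.equivalence.refl [(0 : Fin 2)]).append ih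
    exact Plactic.equivalence.trans hstep (.rel _ _ hknuth)

lemma plactic_normalWord_append_zero (k i j : ℕ) :
    Plactic (normalWord k i (j + 1) ++ [0]) (normalWord (k + 1) (i + 1) j) := by
  have h₁ := (Plactic.equivalence.refl (replicate k 1 ++ replicate i 0)).append
    (plactic_ones_zero j)
  have h₂ := (Plactic.equivalence.refl (replicate k 1)).append
    ((plactic_zeros_one_zero i).append (Plactic.equivalence.refl (replicate j 1)))
  simp only [append_assoc, cons_append, nil_append] at h₁ h₂
  convert Plactic.equivalence.trans h₁ h₂ using 1 <;> simp [normalWord, replicate_succ']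

lemma exists_plactic_normalWord (w : List (Fin 2)) :
    ∃ k i j, k ≤ i ∧ Plactic w (normalWord k i j) := by
  induction w using reverseRecOn with
  | nil => exact ⟨0, 0, 0, le_rfl, .refl _⟩
  | append_singleton w x ih =>
    obtain ⟨k, i, j, hki, hw⟩ := ih
    have hwx : Plactic (w ++ [x]) (normalWord k i j ++ [x]) := hw.append (.refl _)
    fin_cases x
    · cases j with
      | zero => exact ⟨k, i + 1, 0, by omega, by simpa [normalWord, replicate_succ'] using hwx⟩
      | succ j => exact ⟨k + 1, i + 1, j, by omega,
          Plactic.equivalence.trans hwx (plactic_normalWord_append_zero k i j)⟩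
    · exact ⟨k, i, j + 1, hki, by simpa [normalWord, replicate_succ'] using hwx⟩

end TwoLetter

/-- over a two-letter alphabet, the grammic congruence (equality
of actions on all rows) coincides with the plactic congruence. -/
theorem two_letters_gram_iff_plactic (u v : List (Fin 2)) :
    (∀ r : List (Fin 2), List.Pairwise (· ≤ ·) r → rowActW r u = rowActW r v) ↔
      Plactic u v := by
  refine ⟨fun h => ?_, fun h r hr => h.rowActW_eq hr⟩
  obtain ⟨k, i, j, hk, hu⟩ := TwoLetter.exists_plactic_normalWord u
  obtain ⟨k', i', j', hk', hv⟩ := TwoLetter.exists_plactic_normalWord v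
  have hnf := TwoLetter.normalWord_eq_of_rowActW_eq hk hk' fun r hr => by
    rw [← hu.rowActW_eq hr, ← hv.rowActW_eq hr, h r hr]
  exact Plactic.equivalence.trans hu (hnf ▸ Plactic.equivalence.symm hv)
end

section
/- For any word u over a totally ordered alphabet, the row obtained by acting with u on the empty row (equivalently, on the zero vector) equals the bottom row of the Young tableau P(u) produced by Schensted row insertion of u. -/
/-- Row insertion returning the new row together with the bumped letter. -/
def rowBump {A : Type*} [LinearOrder A] : List A → A → List A × Option A
  | [], b => ([b], none)
  | a :: r, b =>
      if a ≤ b then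
        let p := rowBump r b
        (a :: p.1, p.2)
      else (b :: r, some a)

/-- Schensted insertion of a letter into a tableau, given as its list of rows
from bottom to top. -/
def tabInsert {A : Type*} [LinearOrder A] : List (List A) → A → List (List A)
  | [], b => [[b]]
  | r :: rest, b =>
      match rowBump r b with
      | (r', none) => r' :: rest
      | (r', some a) => r' :: tabInsert rest a

/-- The Schensted `P`-tableau of a word, as its list of rows bottom to top. -/
def Ptab {A : Type*} [LinearOrder A] (w : List A) : List (List A) :=
  w.foldl tabInsert []

lemma rowBump_fst {A : Type*} [LinearOrder A] (r : List A) (b : A) :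
    (rowBump r b).1 = rowIns r b := by
  induction r with
  | nil => rfl
  | cons a r ih =>
    simp only [rowBump, rowIns]
    split <;> simp [ih]

lemma tabInsert_headD {A : Type*} [LinearOrder A] (t : List (List A)) (b : A) :
    (tabInsert t b).headD [] = rowIns (t.headD []) b := by
  cases t with
  | nil => rfl
  | cons r rest =>
    simp only [tabInsert]
    have := rowBump_fst r b
    cases h : rowBump r b with
    | mk r' o =>
      cases o <;> simp_all

lemma foldl_headD {A : Type*} [LinearOrder A] (u : List A) (t : List (List A)) :
    rowActW (t.headD []) u = (u.foldl tabInsert t).headD [] := by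
  induction u generalizing t with
  | nil => rfl
  | cons b u ih =>
    simp only [rowActW, List.foldl] at *
    rw [← tabInsert_headD, ih]

/-- acting with a word on the empty row gives the bottom row of
its Schensted tableau. -/
theorem act_empty_eq_bottom_row {A : Type*} [LinearOrder A] (u : List A) :
    rowActW [] u = (Ptab u).headD [] := foldl_headD u []
end

section
/- For the alphabet {1,2,3} acting on ℕ^3 and words of the row normal form w(a,c) = 3^a 2^b 3^c 1^d 2^e 3^f with a ≤ b ≤ d, b+c ≤ d+e, b,d > 0: two such words w(a,c) and w(a',c') with a+c = a'+c', b, d, e, f fixed, induce the same map on ℕ^3 if and only if either (a,c) = (a',c') or both c ≤ e and c' ≤ e. -/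
/-- Action of a letter of `{1,2,3}` (encoded as `Fin 3`) on a row identified
with its multiplicity vector `(x₁,x₂,x₃) ∈ ℕ³`. -/
def act3 (x : ℕ × ℕ × ℕ) (j : Fin 3) : ℕ × ℕ × ℕ :=
  if j = 0 then
    if 0 < x.2.1 then (x.1 + 1, x.2.1 - 1, x.2.2)
    else if 0 < x.2.2 then (x.1 + 1, x.2.1, x.2.2 - 1)
    else (x.1 + 1, x.2.1, x.2.2)
  else if j = 1 then (x.1, x.2.1 + 1, x.2.2 - 1)
  else (x.1, x.2.1, x.2.2 + 1)

/-- Action of a word, composing letter actions from left to right. -/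
def actW3 (x : ℕ × ℕ × ℕ) (w : List (Fin 3)) : ℕ × ℕ × ℕ :=
  w.foldl act3 x

/-- The word `3^a 2^b 3^c 1^d 2^e 3^f` over `{1,2,3}` (letters encoded as
`0,1,2 : Fin 3`). -/
def wNF (a b c d e f : ℕ) : List (Fin 3) :=
  List.replicate a 2 ++ List.replicate b 1 ++ List.replicate c 2 ++
    List.replicate d 0 ++ List.replicate e 1 ++ List.replicate f 2

lemma actW3_append (x : ℕ × ℕ × ℕ) (l₁ l₂ : List (Fin 3)) :
    actW3 x (l₁ ++ l₂) = actW3 (actW3 x l₁) l₂ := by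
  simp [actW3, List.foldl_append]

lemma actW3_rep2 (x : ℕ × ℕ × ℕ) (n : ℕ) :
    actW3 x (List.replicate n 2) = (x.1, x.2.1, x.2.2 + n) := by
  induction n generalizing x with
  | zero => simp [actW3]
  | succ n ih =>
    rw [List.replicate_succ]
    show actW3 (act3 x 2) _ = _
    rw [ih]
    simp [act3]
    omega

lemma actW3_rep1 (x : ℕ × ℕ × ℕ) (n : ℕ) :
    actW3 x (List.replicate n 1) = (x.1, x.2.1 + n, x.2.2 - n) := by
  induction n generalizing x with
  | zero => simp [actW3]
  | succ n ih =>
    rw [List.replicate_succ]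
    show actW3 (act3 x 1) _ = _
    rw [ih]
    simp [act3]
    constructor <;> omega

lemma actW3_rep0 (x : ℕ × ℕ × ℕ) (n : ℕ) :
    actW3 x (List.replicate n 0) = (x.1 + n, x.2.1 - n, x.2.2 - (n - x.2.1)) := by
  induction n generalizing x with
  | zero => simp [actW3]
  | succ n ih =>
    rw [List.replicate_succ]
    show actW3 (act3 x 0) _ = _
    simp only [act3]
    split_ifs with h1 h2 <;> rw [ih] <;> simp <;> omega

lemma actW3_wNF (x : ℕ × ℕ × ℕ) (a b c d e f : ℕ) :
    actW3 x (wNF a b c d e f) =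
      (x.1 + d, (x.2.1 + b) - d + e,
        ((x.2.2 + a) - b + c - (d - (x.2.1 + b)) - e) + f) := by
  simp only [wNF, actW3_append, actW3_rep2, actW3_rep1, actW3_rep0]

/-- characterization of grammic-congruent row normal forms. -/
theorem gram_row_normal_forms (a c a' c' b d e f : ℕ)
    (hab : a ≤ b) (ha'b : a' ≤ b) (hbd : b ≤ d)
    (hbc : b + c ≤ d + e) (hbc' : b + c' ≤ d + e)
    (hb : 0 < b) (hd : 0 < d) (hsum : a + c = a' + c') :
    (∀ x : ℕ × ℕ × ℕ, actW3 x (wNF a b c d e f) = actW3 x (wNF a' b c' d e f)) ↔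
      ((a, c) = (a', c') ∨ (c ≤ e ∧ c' ≤ e)) := by
  simp only [actW3_wNF, Prod.mk.injEq, Prod.ext_iff]
  constructor
  · intro h
    have h1 := h (0, d, 0)
    simp at h1
    omega
  · intro h x
    rcases h with h | h
    · obtain ⟨rfl, rfl⟩ : a = a' ∧ c = c' := by
        simpa [Prod.ext_iff] using h
      simp
    · refine ⟨trivial, trivial, ?_⟩
      omega
end

section
/- Two words u, v over {1,2,3} induce the same map on all of ℕ^3 under the row-insertion action if and only if they have the same length and their induced maps agree on the finite box {(x1,x2,x3) ∈ ℕ^3 : 0 ≤ x_i ≤ max(|u|,|v|)+1}. -/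
/-!
The weight `3 x₁ + 2 x₂ + x₃` grows by exactly one with every letter as long as no truncation
occurs, which is the case from a point with `x₂, x₃ ≥ |w|`; so a word's length can be read off
its action. Conversely, letters only test `x₂ > 0` and `x₃ > 0`, so the action of `w` commutes
with translations in the `x₁` direction, and with translations in the `x₂` (resp. `x₃`) direction
from points with `x₂ ≥ |w|` (resp. `x₃ ≥ |w|`). Every point is such a translate of a point of the
box, hence agreement on the box propagates to all of `ℕ³`.
-/

lemma actW3_cons (x : ℕ × ℕ × ℕ) (j : Fin 3) (w : List (Fin 3)) :
    actW3 x (j :: w) = actW3 (act3 x j) w := rfl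

lemma le_act3_snd_fst_add_one (x : ℕ × ℕ × ℕ) (j : Fin 3) : x.2.1 ≤ (act3 x j).2.1 + 1 := by
  unfold act3; split_ifs <;> simp only <;> omega

lemma le_act3_snd_snd_add_one (x : ℕ × ℕ × ℕ) (j : Fin 3) : x.2.2 ≤ (act3 x j).2.2 + 1 := by
  unfold act3; split_ifs <;> simp only <;> omega

lemma act3_add (x y : ℕ × ℕ × ℕ) (j : Fin 3) (h₂ : y.2.1 = 0 ∨ 0 < x.2.1)
    (h₃ : y.2.2 = 0 ∨ 0 < x.2.2) : act3 (x + y) j = act3 x j + y := by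
  obtain ⟨a, b, c⟩ := x
  obtain ⟨a', b', c'⟩ := y
  simp only at h₂ h₃
  simp only [act3, Prod.mk_add_mk]
  split_ifs <;> simp only [Prod.mk_add_mk, Prod.mk.injEq, and_true, true_and] <;> omega

lemma actW3_add (w : List (Fin 3)) (x y : ℕ × ℕ × ℕ) (h₂ : y.2.1 = 0 ∨ w.length ≤ x.2.1)
    (h₃ : y.2.2 = 0 ∨ w.length ≤ x.2.2) : actW3 (x + y) w = actW3 x w + y := by
  induction w generalizing x with
  | nil => rfl
  | cons j w ih =>
    simp only [List.length_cons] at h₂ h₃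
    have hx₂ := le_act3_snd_fst_add_one x j
    have hx₃ := le_act3_snd_snd_add_one x j
    rw [actW3_cons, actW3_cons, act3_add x y j (by omega) (by omega)]
    exact ih _ (by omega) (by omega)

lemma actW3_eq_actW3_min_add (w : List (Fin 3)) (x : ℕ × ℕ × ℕ) {n : ℕ} (hw : w.length ≤ n) :
    actW3 x w =
      actW3 (min x.1 n, min x.2.1 n, min x.2.2 n) w + (x.1 - n, x.2.1 - n, x.2.2 - n) := by
  have hx : x = (min x.1 n, min x.2.1 n, min x.2.2 n) + (x.1 - n, x.2.1 - n, x.2.2 - n) := by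
    simp only [Prod.mk_add_mk, Prod.ext_iff]; omega
  conv_lhs => rw [hx]
  exact actW3_add w _ _ (by simp only; omega) (by simp only; omega)

def weight3 (x : ℕ × ℕ × ℕ) : ℕ := 3 * x.1 + 2 * x.2.1 + x.2.2

lemma weight3_act3 (x : ℕ × ℕ × ℕ) (j : Fin 3) (h₂ : 0 < x.2.1) (h₃ : 0 < x.2.2) :
    weight3 (act3 x j) = weight3 x + 1 := by
  unfold act3 weight3; split_ifs <;> simp only <;> omega

lemma weight3_actW3 (w : List (Fin 3)) (x : ℕ × ℕ × ℕ) (h₂ : w.length ≤ x.2.1)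
    (h₃ : w.length ≤ x.2.2) : weight3 (actW3 x w) = weight3 x + w.length := by
  induction w generalizing x with
  | nil => rfl
  | cons j w ih =>
    simp only [List.length_cons] at h₂ h₃
    have hx₂ := le_act3_snd_fst_add_one x j
    have hx₃ := le_act3_snd_snd_add_one x j
    rw [actW3_cons, ih _ (by omega) (by omega), weight3_act3 x j (by omega) (by omega),
      List.length_cons]
    omega

/-- two words act identically on all of `ℕ³` iff they have the
same length and act identically on the box of side `max(|u|,|v|)+1`. -/
theorem gram_iff_agree_on_box (u v : List (Fin 3)) :
    (∀ x : ℕ × ℕ × ℕ, actW3 x u = actW3 x v) ↔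
      (u.length = v.length ∧
        ∀ x : ℕ × ℕ × ℕ,
          x.1 ≤ max u.length v.length + 1 →
          x.2.1 ≤ max u.length v.length + 1 →
          x.2.2 ≤ max u.length v.length + 1 →
          actW3 x u = actW3 x v) := by
  set n := max u.length v.length
  have hu : u.length ≤ n := le_max_left _ _
  have hv : v.length ≤ n := le_max_right _ _
  constructor
  · intro h
    refine ⟨?_, fun x _ _ _ => h x⟩
    have := congrArg weight3 (h (0, n, n))
    rwa [weight3_actW3 u _ hu hu, weight3_actW3 v _ hv hv, Nat.add_left_cancel_iff] at this
  · rintro ⟨-, hbox⟩ x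
    rw [actW3_eq_actW3_min_add u x hu, actW3_eq_actW3_min_add v x hv,
      hbox _ (by simp only; omega) (by simp only; omega) (by simp only; omega)]
end

section
/- For a word u over {1,...,k} of length n and a fixed coordinate i, the function x_i ↦ X(x_i)·u (with all other coordinates held at fixed constant values) is affine in x_i for x_i ≥ n; consequently, if two words u, v of length n agree as functions of x_i for all 0 ≤ x_i ≤ n+1, they agree for all x_i ∈ ℕ. -/
/-- Row insertion (bumped letter discarded) on multiplicity vectors in `ℕᵏ`:
letter `j` increments coordinate `j` and decrements the least coordinate
`h > j` with positive value, if any. -/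
def actV {k : ℕ} (x : Fin k → ℕ) (j : Fin k) : Fin k → ℕ :=
  let S : Finset (Fin k) := Finset.univ.filter fun i => j < i ∧ 0 < x i
  if hS : S.Nonempty then
    fun i => if i = j then x j + 1 else if i = S.min' hS then x i - 1 else x i
  else
    fun i => if i = j then x j + 1 else x i

/-- One step of `actV` decreases any coordinate by at most one. -/
lemma actV_ge {k : ℕ} (x : Fin k → ℕ) (a c : Fin k) : x c ≤ actV x a c + 1 := by
  simp only [actV]
  split
  · rename_i hS
    have hm := Finset.min'_mem _ hS
    simp only [Finset.mem_filter] at hm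
    dsimp only
    split_ifs with h1 h2
    · subst h1; omega
    · rw [h2]; omega
    · omega
  · dsimp only
    split_ifs with h1
    · subst h1; omega
    · omega

/-- If coordinate `i` is positive, shifting it commutes with one step of `actV`. -/
lemma actV_update {k : ℕ} (y : Fin k → ℕ) (a i : Fin k) (d : ℕ) (hyi : 0 < y i) :
    actV (Function.update y i (y i + d)) a =
      Function.update (actV y a) i (actV y a i + d) := by
  have hset : (Finset.univ.filter fun c => a < c ∧ 0 < Function.update y i (y i + d) c) =
      (Finset.univ.filter fun c => a < c ∧ 0 < y c) := by
    apply Finset.filter_congr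
    intro c _
    by_cases hc : c = i
    · subst hc; simp [Function.update_self]; omega
    · simp [Function.update_of_ne hc]
  simp only [actV, hset]
  split
  · funext c
    dsimp only
    rcases eq_or_ne c i with rfl | hci
    · simp only [Function.update_self]
      rcases eq_or_ne c a with rfl | hca
      · simp only [eq_self_iff_true, if_true, Function.update_self]; omega
      · simp only [if_neg hca]
        split_ifs <;> omega
    · simp only [Function.update_of_ne hci]
      rcases eq_or_ne c a with rfl | hca
      · simp only [eq_self_iff_true, if_true, Function.update_of_ne hci]
      · simp only [if_neg hca]
  · funext c
    dsimp only
    rcases eq_or_ne c i with rfl | hci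
    · simp only [Function.update_self]
      rcases eq_or_ne c a with rfl | hca
      · simp only [eq_self_iff_true, if_true, Function.update_self]; omega
      · simp only [if_neg hca]
    · simp only [Function.update_of_ne hci]
      rcases eq_or_ne c a with rfl | hca
      · simp only [eq_self_iff_true, if_true, Function.update_of_ne hci]
      · simp only [if_neg hca]

/-- If coordinate `i` is at least the length of the word, shifting it by `d`
commutes with the action of the word. -/
lemma foldl_actV_update {k : ℕ} (w : List (Fin k)) : ∀ (y : Fin k → ℕ) (i : Fin k) (d : ℕ),
    w.length ≤ y i →
    w.foldl actV (Function.update y i (y i + d)) =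
      Function.update (w.foldl actV y) i ((w.foldl actV y) i + d) := by
  induction w with
  | nil => intro y i d h; simp
  | cons a w ih =>
    intro y i d h
    simp only [List.foldl_cons, List.length_cons] at *
    rw [actV_update y a i d (by omega)]
    exact ih (actV y a) i d (by have := actV_ge y a i; omega)

lemma foldl_actV_shift {k n : ℕ} (w : List (Fin k)) (i : Fin k) (x0 : Fin k → ℕ)
    (hw : w.length = n) (d : ℕ) :
    w.foldl actV (Function.update x0 i (n + d)) =
      Function.update (w.foldl actV (Function.update x0 i n)) i
        ((w.foldl actV (Function.update x0 i n)) i + d) := by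
  have h1 : Function.update x0 i (n + d) =
      Function.update (Function.update x0 i n) i ((Function.update x0 i n) i + d) := by
    simp [Function.update_idem, Function.update_self]
  rw [h1]
  exact foldl_actV_update w _ i d (by simp [hw])

/-- with all other coordinates fixed, the action of a word of
length `n` is an affine function of the `i`-th coordinate for values `≥ n`;
consequently agreement for all values `≤ n+1` implies agreement everywhere. -/
theorem affine_in_one_coordinate {k n : ℕ} (u v : List (Fin k)) (i : Fin k)
    (x0 : Fin k → ℕ) (hu : u.length = n) (hv : v.length = n) :
    (∀ t, n ≤ t → ∀ j : Fin k,
      ((u.foldl actV (Function.update x0 i t)) j : ℤ) =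
        (u.foldl actV (Function.update x0 i n)) j +
          ((t : ℤ) - n) *
            (((u.foldl actV (Function.update x0 i (n + 1))) j : ℤ) -
              (u.foldl actV (Function.update x0 i n)) j)) ∧
    ((∀ t ≤ n + 1,
        u.foldl actV (Function.update x0 i t) =
          v.foldl actV (Function.update x0 i t)) →
      ∀ t, u.foldl actV (Function.update x0 i t) =
        v.foldl actV (Function.update x0 i t)) := by
  constructor
  · intro t ht j
    obtain ⟨d, rfl⟩ := Nat.exists_eq_add_of_le ht
    rw [foldl_actV_shift u i x0 hu d, foldl_actV_shift u i x0 hu 1]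
    rcases eq_or_ne j i with rfl | hji
    · simp only [Function.update_self]
      push_cast
      ring
    · simp only [Function.update_of_ne hji]
      ring
  · intro hagree t
    by_cases ht : t ≤ n + 1
    · exact hagree t ht
    · obtain ⟨d, rfl⟩ : ∃ d, t = n + d := ⟨t - n, by omega⟩
      rw [foldl_actV_shift u i x0 hu d, foldl_actV_shift v i x0 hv d,
        hagree n (by omega)]
end

section
/- Over a four-letter alphabet {1,2,3,4}, the words 4213 and 2413 are grammic congruent (both induce the same map on ℕ^4), yet their projections 421 and 241 to the subalphabet {1,2,4} are not grammic congruent. -/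
lemma actV_none {k : ℕ} (x : Fin k → ℕ) (j : Fin k) (h : ∀ i, j < i → x i = 0) :
    actV x j = fun i => if i = j then x j + 1 else x i := by
  have hS : ¬ (Finset.univ.filter fun i => j < i ∧ 0 < x i).Nonempty := by
    simp only [Finset.filter_nonempty_iff]
    rintro ⟨i, -, hji, hxi⟩
    exact absurd (h i hji) (by omega)
  simp only [actV, dif_neg hS]

lemma actV_some {k : ℕ} (x : Fin k → ℕ) (j h : Fin k) (hjh : j < h) (hx : 0 < x h)
    (hmin : ∀ i, j < i → 0 < x i → h ≤ i) :
    actV x j = fun i => if i = j then x j + 1 else if i = h then x i - 1 else x i := by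
  have hmem : h ∈ Finset.univ.filter fun i => j < i ∧ 0 < x i := by simp [hjh, hx]
  have hS : (Finset.univ.filter fun i => j < i ∧ 0 < x i).Nonempty := ⟨h, hmem⟩
  have hm : (Finset.univ.filter fun i => j < i ∧ 0 < x i).min' hS = h := by
    refine le_antisymm (Finset.min'_le _ _ hmem) (Finset.le_min' _ _ _ ?_)
    intro y hy
    simp only [Finset.mem_filter] at hy
    exact hmin y hy.2.1 hy.2.2
  simp only [actV, dif_pos hS, hm]

lemma act3_s17 (a b c d : ℕ) : actV ![a,b,c,d] (3:Fin 4) = ![a,b,c,d+1] := by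
  rw [actV_none]
  · funext i; fin_cases i <;> rfl
  · intro i hi; rw [Fin.lt_def] at hi; have := i.isLt; omega

lemma key (a b c d : ℕ) :
    List.foldl actV ![a,b,c,d] ([3,1,0,2] : List (Fin 4)) =
    List.foldl actV ![a,b,c,d] ([1,3,0,2] : List (Fin 4)) := by
  simp only [List.foldl]
  rcases Nat.eq_zero_or_pos c with hc | hc
  · subst hc
    rcases Nat.eq_zero_or_pos d with hd | hd
    · subst hd
      -- c = 0, d = 0
      have t1 : actV ![a,b,0,1] (1:Fin 4) = ![a,b+1,0,0] := by
        rw [actV_some _ _ 3 (by decide) (by simp)]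
        · funext i; fin_cases i <;> rfl
        · intro i h1 h2; fin_cases i <;> simp_all
      have t2 : actV ![a,b+1,0,0] (0:Fin 4) = ![a+1,b,0,0] := by
        rw [actV_some _ _ 1 (by decide) (by simp)]
        · funext i; fin_cases i <;> rfl
        · intro i h1 h2; fin_cases i <;> simp_all
      have t3 : actV ![a+1,b,0,0] (2:Fin 4) = ![a+1,b,1,0] := by
        rw [actV_none]
        · funext i; fin_cases i <;> rfl
        · intro i hi; fin_cases i <;> simp_all
      have u1 : actV ![a,b,0,0] (1:Fin 4) = ![a,b+1,0,0] := by
        rw [actV_none]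
        · funext i; fin_cases i <;> rfl
        · intro i hi; fin_cases i <;> simp_all
      have u3 : actV ![a,b+1,0,1] (0:Fin 4) = ![a+1,b,0,1] := by
        rw [actV_some _ _ 1 (by decide) (by simp)]
        · funext i; fin_cases i <;> rfl
        · intro i h1 h2; fin_cases i <;> simp_all
      have u4 : actV ![a+1,b,0,1] (2:Fin 4) = ![a+1,b,1,0] := by
        rw [actV_some _ _ 3 (by decide) (by simp)]
        · funext i; fin_cases i <;> rfl
        · intro i h1 h2; fin_cases i <;> simp_all
      rw [act3_s17, t1, t2, t3, u1, act3_s17, u3, u4]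
    · -- c = 0, 0 < d
      have t1 : actV ![a,b,0,d+1] (1:Fin 4) = ![a,b+1,0,d] := by
        rw [actV_some _ _ 3 (by decide) (by simp)]
        · funext i; fin_cases i <;> rfl
        · intro i h1 h2; fin_cases i <;> simp_all
      have t2 : actV ![a,b+1,0,d] (0:Fin 4) = ![a+1,b,0,d] := by
        rw [actV_some _ _ 1 (by decide) (by simp)]
        · funext i; fin_cases i <;> rfl
        · intro i h1 h2; fin_cases i <;> simp_all
      have t3 : actV ![a+1,b,0,d] (2:Fin 4) = ![a+1,b,1,d-1] := by
        rw [actV_some _ _ 3 (by decide) (by simpa using hd)]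
        · funext i; fin_cases i <;> rfl
        · intro i h1 h2; fin_cases i <;> simp_all
      have u1 : actV ![a,b,0,d] (1:Fin 4) = ![a,b+1,0,d-1] := by
        rw [actV_some _ _ 3 (by decide) (by simpa using hd)]
        · funext i; fin_cases i <;> rfl
        · intro i h1 h2; fin_cases i <;> simp_all
      have u2 : actV ![a,b+1,0,d-1] (3:Fin 4) = ![a,b+1,0,d] := by
        rw [act3_s17]
        funext i; fin_cases i <;> simp <;> omega
      rw [act3_s17, t1, t2, t3, u1, u2, t2, t3]
  · -- 0 < c
    have t1 : actV ![a,b,c,d+1] (1:Fin 4) = ![a,b+1,c-1,d+1] := by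
      rw [actV_some _ _ 2 (by decide) (by simpa using hc)]
      · funext i; fin_cases i <;> rfl
      · intro i h1 h2; fin_cases i <;> simp_all
    have t2 : actV ![a,b+1,c-1,d+1] (0:Fin 4) = ![a+1,b,c-1,d+1] := by
      rw [actV_some _ _ 1 (by decide) (by simp)]
      · funext i; fin_cases i <;> rfl
      · intro i h1 h2; fin_cases i <;> simp_all
    have t3 : actV ![a+1,b,c-1,d+1] (2:Fin 4) = ![a+1,b,c,d] := by
      rw [actV_some _ _ 3 (by decide) (by simp)]
      · funext i; fin_cases i <;> simp <;> omega
      · intro i h1 h2; fin_cases i <;> simp_all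
    have u1 : actV ![a,b,c,d] (1:Fin 4) = ![a,b+1,c-1,d] := by
      rw [actV_some _ _ 2 (by decide) (by simpa using hc)]
      · funext i; fin_cases i <;> rfl
      · intro i h1 h2; fin_cases i <;> simp_all
    rw [act3_s17, t1, t2, t3, u1, act3_s17, t2, t3]

/-- over four letters, `4213 ≡_gram 2413` (letters `1,2,3,4`
encoded as `0,1,2,3 : Fin 4`), yet the projections `421` and `241` to the
subalphabet `{1,2,4}` are not grammic congruent over that subalphabet
(rows over `{1,2,4}` being the vectors vanishing at coordinate `3`). -/
theorem four_letters_projection_fails :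
    (∀ x : Fin 4 → ℕ,
      ([3,1,0,2] : List (Fin 4)).foldl actV x =
        ([1,3,0,2] : List (Fin 4)).foldl actV x) ∧
    ¬ (∀ x : Fin 4 → ℕ, x 2 = 0 →
      ([3,1,0] : List (Fin 4)).foldl actV x =
        ([1,3,0] : List (Fin 4)).foldl actV x) := by
  constructor
  · intro x
    have hx : x = ![x 0, x 1, x 2, x 3] := by funext i; fin_cases i <;> rfl
    rw [hx]
    exact key (x 0) (x 1) (x 2) (x 3)
  · intro h
    exact absurd (congrFun (h ![0,0,0,0] rfl) 3) (by decide)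
end

section
/- For any γ ≥ 0 and the plactic congruence over {1 < 2 < 3}, the identity 1^γ (32)^γ ≡ (31)^γ 2^γ holds, i.e., the word consisting of γ ones followed by γ copies of 32 is Knuth-equivalent to γ copies of 31 followed by γ twos. -/
/-!
Induction on `γ`. The inductive hypothesis and two sliding moves give
`1^(γ+1) (32)^(γ+1) ≡ 1 (31)^γ 2^γ 32 ≡ 1 (31)^γ 3 2^(γ+1) ≡ (31)^γ 1 3 2^(γ+1)`,
and one Knuth move `132 ≡ 312` finishes. Both sliding moves iterate the Knuth move
`aca ≡ caa` (`a < c`): it moves `3` left across `2^γ` in `2^γ 32`, and `1` right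
across `(31)^γ`.
-/

namespace KnuthStep

variable {A : Type*} [LinearOrder A] {x y : List A}

theorem append_left_s19 (w : List A) (h : KnuthStep x y) : KnuthStep (w ++ x) (w ++ y) := by
  cases h with
  | k1 u v a b c h1 h2 => simpa using k1 (w ++ u) v a b c h1 h2
  | k2 u v a b c h1 h2 => simpa using k2 (w ++ u) v a b c h1 h2

theorem append_right_s19 (w : List A) (h : KnuthStep x y) : KnuthStep (x ++ w) (y ++ w) := by
  cases h with
  | k1 u v a b c h1 h2 => simpa using k1 u (v ++ w) a b c h1 h2
  | k2 u v a b c h1 h2 => simpa using k2 u (v ++ w) a b c h1 h2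

end KnuthStep

namespace Plactic

variable {A : Type*} [LinearOrder A] {x y : List A}

theorem refl (x : List A) : Plactic x x := Relation.EqvGen.refl x

theorem trans {z : List A} (hxy : Plactic x y) (hyz : Plactic y z) : Plactic x z :=
  Relation.EqvGen.trans _ _ _ hxy hyz

instance : @Trans (List A) (List A) (List A) Plactic Plactic Plactic := ⟨trans⟩

theorem acb_cab {a b c : A} (hab : a ≤ b) (hbc : b < c) (u v : List A) :
    Plactic (u ++ [a, c, b] ++ v) (u ++ [c, a, b] ++ v) :=
  Relation.EqvGen.rel _ _ (KnuthStep.k2 u v a b c hab hbc)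

theorem append_left_s19 (w : List A) (h : Plactic x y) : Plactic (w ++ x) (w ++ y) := by
  induction h with
  | rel _ _ h => exact .rel _ _ (h.append_left_s19 w)
  | refl => exact refl _
  | symm _ _ _ ih => exact Relation.EqvGen.symm _ _ ih
  | trans _ _ _ _ _ ih₁ ih₂ => exact ih₁.trans ih₂

theorem append_right_s19 (w : List A) (h : Plactic x y) : Plactic (x ++ w) (y ++ w) := by
  induction h with
  | rel _ _ h => exact .rel _ _ (h.append_right_s19 w)
  | refl => exact refl _
  | symm _ _ _ ih => exact Relation.EqvGen.symm _ _ ih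
  | trans _ _ _ _ _ ih₁ ih₂ => exact ih₁.trans ih₂

theorem cons_flatten_replicate_pair {a c : A} (hac : a < c) (n : ℕ) :
    Plactic (a :: (List.replicate n [c, a]).flatten)
      ((List.replicate n [c, a]).flatten ++ [a]) := by
  induction n with
  | zero => exact refl _
  | succ n ih =>
    have jump : Plactic (a :: (List.replicate (n + 1) [c, a]).flatten)
        ([c, a] ++ a :: (List.replicate n [c, a]).flatten) := by
      simpa [List.replicate_succ] using acb_cab le_rfl hac [] (List.replicate n [c, a]).flatten
    simpa [List.replicate_succ] using jump.trans (ih.append_left_s19 [c, a])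

theorem replicate_append_pair {b c : A} (hbc : b < c) (n : ℕ) :
    Plactic (List.replicate n b ++ [c, b]) (c :: List.replicate (n + 1) b) := by
  induction n with
  | zero => exact refl _
  | succ n ih =>
    have jump : Plactic ([b, c, b] ++ List.replicate n b) (c :: List.replicate (n + 2) b) := by
      simpa [List.replicate_succ] using acb_cab le_rfl hbc [] (List.replicate n b)
    simpa [List.replicate_succ] using (ih.append_left_s19 [b]).trans jump

theorem replicate_append_flatten_replicate {a b c : A} (hab : a < b) (hbc : b < c) (n : ℕ) :
    Plactic (List.replicate n a ++ (List.replicate n [c, b]).flatten)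
      ((List.replicate n [c, a]).flatten ++ List.replicate n b) := by
  induction n with
  | zero => exact refl _
  | succ n ih =>
    set K := (List.replicate n [c, a]).flatten
    calc List.replicate (n + 1) a ++ (List.replicate (n + 1) [c, b]).flatten
        = [a] ++ (List.replicate n a ++ (List.replicate n [c, b]).flatten ++ [c, b]) := by
          rw [List.replicate_succ, List.replicate_succ']; simp
      Plactic _ ([a] ++ (K ++ List.replicate n b ++ [c, b])) :=
          (ih.append_right_s19 [c, b]).append_left_s19 [a]
      _ = (a :: K) ++ (List.replicate n b ++ [c, b]) := by simp
      Plactic _ ((a :: K) ++ c :: List.replicate (n + 1) b) :=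
          (replicate_append_pair hbc n).append_left_s19 (a :: K)
      Plactic _ ((K ++ [a]) ++ c :: List.replicate (n + 1) b) :=
          (cons_flatten_replicate_pair (hab.trans hbc) n).append_right_s19 _
      _ = K ++ [a, c, b] ++ List.replicate n b := by simp [List.replicate_succ]
      Plactic _ (K ++ [c, a, b] ++ List.replicate n b) := acb_cab hab.le hbc K (List.replicate n b)
      _ = (List.replicate (n + 1) [c, a]).flatten ++ List.replicate (n + 1) b := by
          rw [List.replicate_succ', List.replicate_succ]; simp [K]

end Plactic

/-- `1^γ (32)^γ ≡ (31)^γ 2^γ` in the plactic monoid over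
`{1 < 2 < 3}` (letters encoded as `0,1,2 : Fin 3`). -/
theorem plactic_column_identity (γ : ℕ) :
    Plactic
      (List.replicate γ (0 : Fin 3) ++ (List.replicate γ [2, 1]).flatten)
      ((List.replicate γ [2, 0]).flatten ++ List.replicate γ (1 : Fin 3)) :=
  Plactic.replicate_append_flatten_replicate (by decide) (by decide) γ
end
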